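/- Let A_1, ..., A_n be independent real-valued random variables with E[A_i] = c_i and Var(A_i) ≤ (ν c_i)^2 for each i, where c_i > 0 and 0 < ν ≤ ε/(16√n) for some 0 < ε < 1. Then the product F = ∏ A_i satisfies E[F] = ∏ c_i and Var(F) ≤ (ε²/128)·(∏ c_i)². -/

import Mathlib

/-!
By independence, `E[∏ Aᵢ] = ∏ E[Aᵢ]` and `E[(∏ Aᵢ)²] = ∏ E[Aᵢ²]`, so
`Var(∏ Aᵢ) = ∏ (Var Aᵢ + cᵢ²) - ∏ cᵢ² ≤ ((1 + ν²)ⁿ - 1) ∏ cᵢ²`. The choice of `ν` gives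
`2nν² ≤ ε²/128 ≤ 1`, and in that range `(1 + ν²)ⁿ ≤ 1 + 2nν²`.
-/

open MeasureTheory ProbabilityTheory

namespace ProbabilityTheory

variable {Ω ι : Type*} [MeasurableSpace Ω] {μ : Measure Ω} {X : ι → Ω → ℝ}

lemma iIndepFun.integrable_finsetProd (hX : iIndepFun X μ) (hint : ∀ i, Integrable (X i) μ)
    (s : Finset ι) : Integrable (∏ i ∈ s, X i) μ := by
  have := hX.isProbabilityMeasure
  classical
  induction s using Finset.induction with
  | empty => rw [Finset.prod_empty]; exact integrable_const 1
  | insert a s ha ih =>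
    rw [Finset.prod_insert ha, mul_comm]
    exact (hX.indepFun_finsetProd_of_notMem₀ (fun i ↦ (hint i).aemeasurable) ha).integrable_mul
      ih (hint a)

lemma iIndepFun.fun_sq (hX : iIndepFun X μ) : iIndepFun (fun i ω ↦ X i ω ^ 2) μ :=
  hX.comp (fun _ x ↦ x ^ 2) fun _ ↦ measurable_id.pow_const 2

variable [Fintype ι]

lemma iIndepFun.memLp_two_fun_prod (hX : iIndepFun X μ) (hX2 : ∀ i, MemLp (X i) 2 μ) :
    MemLp (fun ω ↦ ∏ i, X i ω) 2 μ := by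
  refine (memLp_two_iff_integrable_sq (Finset.aestronglyMeasurable_fun_prod _
    fun i _ ↦ (hX2 i).aestronglyMeasurable)).2 ?_
  simpa [Finset.prod_fn, Finset.prod_pow] using
    hX.fun_sq.integrable_finsetProd (fun i ↦ (hX2 i).integrable_sq) .univ

lemma iIndepFun.variance_fun_prod [IsProbabilityMeasure μ] (hX : iIndepFun X μ)
    (hX2 : ∀ i, MemLp (X i) 2 μ) :
    variance (fun ω ↦ ∏ i, X i ω) μ = ∏ i, (variance (X i) μ + μ[X i] ^ 2) - ∏ i, μ[X i] ^ 2 := by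
  have h2 : μ[(fun ω ↦ ∏ i, X i ω) ^ 2] = ∏ i, μ[X i ^ 2] := by
    simpa [Finset.prod_pow] using hX.fun_sq.integral_fun_prod_eq_prod_integral
      fun i ↦ (hX2 i).integrable_sq.aestronglyMeasurable
  rw [variance_eq_sub (hX.memLp_two_fun_prod hX2), h2,
    hX.integral_fun_prod_eq_prod_integral fun i ↦ (hX2 i).aestronglyMeasurable, ← Finset.prod_pow]
  simp_rw [variance_eq_sub (hX2 _), sub_add_cancel]

end ProbabilityTheory

lemma one_add_pow_le_one_add_two_mul {x : ℝ} (hx : 0 ≤ x) {n : ℕ} (hnx : 2 * n * x ≤ 1) :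
    (1 + x) ^ n ≤ 1 + 2 * n * x := by
  induction n with
  | zero => simp
  | succ n ih =>
    push_cast at hnx ⊢
    have ih := ih (by nlinarith)
    calc (1 + x) ^ (n + 1) = (1 + x) ^ n * (1 + x) := pow_succ _ _
      _ ≤ (1 + 2 * n * x) * (1 + x) := by gcongr
      _ ≤ 1 + 2 * (n + 1) * x := by nlinarith

lemma two_mul_mul_sq_le_of_le_div_sqrt {n : ℕ} {ν ε : ℝ} (hν0 : 0 ≤ ν)
    (hν : ν ≤ ε / (16 * √n)) : 2 * n * ν ^ 2 ≤ ε ^ 2 / 128 := by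
  rcases n.eq_zero_or_pos with rfl | hn
  · simp only [CharP.cast_eq_zero, mul_zero, zero_mul]; positivity
  have hsqrt : 0 < √(n : ℝ) := Real.sqrt_pos.2 (by exact_mod_cast hn)
  have h : 16 * √n * ν ≤ ε := by rwa [le_div_iff₀ (by positivity), mul_comm] at hν
  have h2 := pow_le_pow_left₀ (by positivity) h 2
  rw [mul_pow, mul_pow, Real.sq_sqrt n.cast_nonneg] at h2
  linarith

theorem stmt_2_general {Ω : Type*} [MeasurableSpace Ω] (μ : Measure Ω) [IsProbabilityMeasure μ]
    (n : ℕ) (A : Fin n → Ω → ℝ) (c : Fin n → ℝ) (ν ε : ℝ)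
    (hε0 : 0 < ε) (hε1 : ε < 1) (hν0 : 0 < ν) (hν : ν ≤ ε / (16 * Real.sqrt n))
    (hL2 : ∀ i, MemLp (A i) 2 μ)
    (hind : iIndepFun A μ)
    (hE : ∀ i, ∫ ω, A i ω ∂μ = c i)
    (hVar : ∀ i, variance (A i) μ ≤ (ν * c i) ^ 2) :
    (∫ ω, ∏ i, A i ω ∂μ = ∏ i, c i) ∧
    variance (fun ω => ∏ i, A i ω) μ ≤ ε ^ 2 / 128 * (∏ i, c i) ^ 2 := by
  refine ⟨by simp_rw [hind.integral_fun_prod_eq_prod_integral fun i ↦ (hL2 i).aestronglyMeasurable,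
    hE], ?_⟩
  have hsmall := two_mul_mul_sq_le_of_le_div_sqrt hν0.le hν
  have hpow := one_add_pow_le_one_add_two_mul (sq_nonneg ν) (n := n) (by nlinarith)
  have hmoments : ∏ i, (variance (A i) μ + c i ^ 2) ≤ (1 + ν ^ 2) ^ n * ∏ i, c i ^ 2 := by
    calc ∏ i, (variance (A i) μ + c i ^ 2) ≤ ∏ i, (1 + ν ^ 2) * c i ^ 2 := by
          gcongr with i
          · exact fun i _ ↦ add_nonneg (variance_nonneg _ _) (sq_nonneg _)
          · linarith [hVar i, mul_pow ν (c i) 2]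
      _ = (1 + ν ^ 2) ^ n * ∏ i, c i ^ 2 := by simp [Finset.prod_mul_distrib]
  rw [hind.variance_fun_prod hL2]
  simp_rw [hE, ← Finset.prod_pow]
  calc ∏ i, (variance (A i) μ + c i ^ 2) - ∏ i, c i ^ 2
      ≤ ((1 + ν ^ 2) ^ n - 1) * ∏ i, c i ^ 2 := by linarith
    _ ≤ ε ^ 2 / 128 * ∏ i, c i ^ 2 := by gcongr; linarith

theorem stmt_2 {Ω : Type*} [MeasurableSpace Ω] (μ : Measure Ω) [IsProbabilityMeasure μ]
    (n : ℕ) (hn : 0 < n) (A : Fin n → Ω → ℝ) (c : Fin n → ℝ) (ν ε : ℝ)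
    (hε0 : 0 < ε) (hε1 : ε < 1) (hν0 : 0 < ν) (hν : ν ≤ ε / (16 * Real.sqrt n))
    (hc : ∀ i, 0 < c i)
    (hmeas : ∀ i, Measurable (A i)) (hL2 : ∀ i, MemLp (A i) 2 μ)
    (hind : iIndepFun A μ)
    (hE : ∀ i, ∫ ω, A i ω ∂μ = c i)
    (hVar : ∀ i, variance (A i) μ ≤ (ν * c i) ^ 2) :
    (∫ ω, ∏ i, A i ω ∂μ = ∏ i, c i) ∧
    variance (fun ω => ∏ i, A i ω) μ ≤ ε ^ 2 / 128 * (∏ i, c i) ^ 2 :=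
  stmt_2_general μ n A c ν ε hε0 hε1 hν0 hν hL2 hind hE hVar
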